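/- Let (A; {E_i}; A*; {E*_i}) be a Leonard system with dual switching element S*. Then for 0 ≤ i ≤ d, S* η_i(A) E*_0 = [(ϕ_1 ϕ_2 ⋯ ϕ_i)/(φ_1 φ_2 ⋯ φ_i)] τ_i(A) E*_0, where τ_i(λ) = (λ-θ_0)⋯(λ-θ_{i-1}) and η_i(λ) = (λ-θ_d)⋯(λ-θ_{d-i+1}). -/

import Mathlib

/-!
Let `ξ` span `E*_0 V` and put `u_i = τ_i(A) ξ`, `v_i = η_i(A) ξ`. Since `A` maps `E*_r V` into
`E*_{r-1} V + E*_r V + E*_{r+1} V`, with a nonzero upward component, `u_i` lies in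
`E*_0 V + ⋯ + E*_i V` with a nonzero `E*_i`-component; also `u_i ∈ E_i V + ⋯ + E_d V`.
The spaces `E*_0 V + ⋯ + E*_{j-1} V` and `E_j V + ⋯ + E_d V` meet trivially: the second is killed
by the monic polynomial `∏_{s ≥ j} (A - θ_s)` of degree `d + 1 - j`, which maps a nonzero vector
of the first to one with a nonzero `E*`-component. Hence `A* u_i - θ*_i u_i`, which lies in
`E*_0 V + ⋯ + E*_{i-1} V` and in `E_{i-1} V + ⋯ + E_d V`, is a multiple `c u_{i-1}`, with `c ≠ 0`
by the same argument for `A*` and the `E_s`; comparing `E*_0`-components identifies `c` with the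
trace formula for `φ_i`. Since `η_i` and `ϕ_i` are `τ_i` and `φ_i` of the relative
`(A; E_{d-i}; A*; E*_i)`, also `A* v_i = θ*_i v_i + ϕ_i v_{i-1}`.

Applying `E*_r` to both recurrences gives `(θ*_r - θ*_i) E*_r u_i = φ_i E*_r u_{i-1}` and the same
for `v` with `ϕ_i`. As `E*_r u_r = E*_r A^r ξ = E*_r v_r`, induction on `i ≥ r` yields
`(ϕ_1⋯ϕ_r)/(φ_1⋯φ_r) E*_r v_i = (ϕ_1⋯ϕ_i)/(φ_1⋯φ_i) E*_r u_i`, and summing over `r` gives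
`S* v_i = (ϕ_1⋯ϕ_i)/(φ_1⋯φ_i) u_i`.
-/

open Polynomial

/-- The primitive idempotent `E_i = ∏_{j ≠ i} (A - θ_j I)/(θ_i - θ_j)` of a
multiplicity-free operator `A` with eigenvalues `θ_0, …, θ_d`. -/
noncomputable def primIdem {K : Type} [Field K] {V : Type} [AddCommGroup V] [Module K V]
    {d : ℕ} (A : Module.End K V) (θ : Fin (d+1) → K) (i : Fin (d+1)) : Module.End K V :=
  Polynomial.aeval A (∏ j ∈ Finset.univ.erase i, ((θ i - θ j)⁻¹ • (X - C (θ j))))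

/-- The polynomial `τ_i(λ) = (λ-θ_0)(λ-θ_1)⋯(λ-θ_{i-1})`. -/
noncomputable def tauP {K : Type} [Field K] (d : ℕ) (θ : Fin (d+1) → K) (i : ℕ) :
    Polynomial K :=
  ∏ k ∈ Finset.univ.filter (fun k : Fin (d+1) => (k : ℕ) < i), (X - C (θ k))

/-- The polynomial `η_i(λ) = (λ-θ_d)(λ-θ_{d-1})⋯(λ-θ_{d-i+1})`. -/
noncomputable def etaP {K : Type} [Field K] (d : ℕ) (θ : Fin (d+1) → K) (i : ℕ) :
    Polynomial K :=
  ∏ k ∈ Finset.univ.filter (fun k : Fin (d+1) => d - i < (k : ℕ)), (X - C (θ k))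

/-- A Leonard system on a `(d+1)`-dimensional vector space `V` over a field `K`. -/
structure LeonardSystem (K V : Type) [Field K] [AddCommGroup V] [Module K V] (d : ℕ) where
  A : Module.End K V
  As : Module.End K V
  θ : Fin (d+1) → K
  θs : Fin (d+1) → K
  hfin : FiniteDimensional K V
  hdim : Module.finrank K V = d + 1
  θ_inj : Function.Injective θ
  θs_inj : Function.Injective θs
  hEig : ∀ i, Module.End.HasEigenvalue A (θ i)
  hEigs : ∀ i, Module.End.HasEigenvalue As (θs i)
  hFar : ∀ i j : Fin (d+1), ((i:ℕ) + 1 < j ∨ (j:ℕ) + 1 < i) →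
    primIdem A θ i * As * primIdem A θ j = 0
  hNear : ∀ i j : Fin (d+1), ((i:ℕ) + 1 = j ∨ (j:ℕ) + 1 = i) →
    primIdem A θ i * As * primIdem A θ j ≠ 0
  hFars : ∀ i j : Fin (d+1), ((i:ℕ) + 1 < j ∨ (j:ℕ) + 1 < i) →
    primIdem As θs i * A * primIdem As θs j = 0
  hNears : ∀ i j : Fin (d+1), ((i:ℕ) + 1 = j ∨ (j:ℕ) + 1 = i) →
    primIdem As θs i * A * primIdem As θs j ≠ 0

namespace LeonardSystem

variable {K : Type} [Field K] {V : Type} [AddCommGroup V] [Module K V] {d : ℕ}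
  (L : LeonardSystem K V d)

/-- `E_i`, the `i`-th primitive idempotent of `A`. -/
noncomputable def E (i : Fin (d+1)) : Module.End K V := primIdem L.A L.θ i

/-- `E*_i`, the `i`-th primitive idempotent of `A*`. -/
noncomputable def Es (i : Fin (d+1)) : Module.End K V := primIdem L.As L.θs i

/-- `τ_i(A)`. -/
noncomputable def tau (i : ℕ) : Module.End K V := Polynomial.aeval L.A (tauP d L.θ i)

/-- `η_i(A)`. -/
noncomputable def eta (i : ℕ) : Module.End K V := Polynomial.aeval L.A (etaP d L.θ i)

/-- The first split sequence `φ_i = (θ*_0-θ*_i) tr(τ_i(A)E*_0)/tr(τ_{i-1}(A)E*_0)`,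
meaningful for `1 ≤ i ≤ d`. -/
noncomputable def φ (i : ℕ) : K :=
  if h : i < d + 1 then
    (L.θs 0 - L.θs ⟨i, h⟩) * (LinearMap.trace K V (L.tau i * L.Es 0))
      / (LinearMap.trace K V (L.tau (i-1) * L.Es 0))
  else 0

/-- The second split sequence `ϕ_i = (θ*_0-θ*_i) tr(η_i(A)E*_0)/tr(η_{i-1}(A)E*_0)`,
meaningful for `1 ≤ i ≤ d`. -/
noncomputable def ϕ (i : ℕ) : K :=
  if h : i < d + 1 then
    (L.θs 0 - L.θs ⟨i, h⟩) * (LinearMap.trace K V (L.eta i * L.Es 0))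
      / (LinearMap.trace K V (L.eta (i-1) * L.Es 0))
  else 0

/-- The switching element `S = ∑_r (ϕ_d⋯ϕ_{d-r+1})/(φ_1⋯φ_r) E_r`. -/
noncomputable def S : Module.End K V :=
  ∑ r : Fin (d+1),
    ((∏ k ∈ Finset.Icc (d - (r:ℕ) + 1) d, L.ϕ k) / (∏ k ∈ Finset.Icc 1 (r:ℕ), L.φ k)) • L.E r

/-- The dual switching element `S* = ∑_r (ϕ_1⋯ϕ_r)/(φ_1⋯φ_r) E*_r`. -/
noncomputable def Ss : Module.End K V :=
  ∑ r : Fin (d+1),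
    ((∏ k ∈ Finset.Icc 1 (r:ℕ), L.ϕ k) / (∏ k ∈ Finset.Icc 1 (r:ℕ), L.φ k)) • L.Es r

end LeonardSystem

section primIdem

variable {K : Type} [Field K] {V : Type} [AddCommGroup V] [Module K V] {d : ℕ}

theorem primIdem_eq_aeval_basis (A : Module.End K V) (θ : Fin (d+1) → K) (i : Fin (d+1)) :
    primIdem A θ i = aeval A (Lagrange.basis Finset.univ θ i) := by
  simp_rw [primIdem, Lagrange.basis, Lagrange.basisDivisor, smul_eq_C_mul]

theorem primIdem_apply_of_hasEigenvector {A : Module.End K V} {θ : Fin (d+1) → K}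
    (hθ : Function.Injective θ) {j : Fin (d+1)} {x : V} (hx : A.HasEigenvector (θ j) x)
    (i : Fin (d+1)) :
    primIdem A θ i x = if i = j then x else 0 := by
  rw [primIdem_eq_aeval_basis, Module.End.aeval_apply_of_hasEigenvector hx]
  split_ifs with hij
  · rw [hij, Lagrange.eval_basis_self hθ.injOn (Finset.mem_univ j), one_smul]
  · rw [Lagrange.eval_basis_of_ne hij (Finset.mem_univ j), zero_smul]

theorem primIdem_comp (A : Module.End K V) (θ : Fin (d+1) → K) {σ : Fin (d+1) → Fin (d+1)}
    (hσ : σ.Bijective) (i : Fin (d+1)) : primIdem A (θ ∘ σ) i = primIdem A θ (σ i) := by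
  unfold primIdem
  congr 1
  exact Finset.prod_bijective σ hσ (by simp [hσ.injective.eq_iff]) (by simp)

end primIdem

section tauP

variable {K : Type} [Field K] {d : ℕ} (θ : Fin (d+1) → K)

theorem monic_tauP (i : ℕ) : (tauP d θ i).Monic :=
  monic_prod_of_monic _ _ fun _ _ => monic_X_sub_C _

theorem natDegree_tauP_le (i : ℕ) : (tauP d θ i).natDegree ≤ i := by
  rw [tauP, natDegree_prod_of_monic _ _ fun _ _ => monic_X_sub_C _]
  simp [Fin.card_filter_val_lt]

theorem natDegree_tauP {i : ℕ} (hi : i ≤ d + 1) : (tauP d θ i).natDegree = i := by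
  rw [tauP, natDegree_prod_of_monic _ _ fun _ _ => monic_X_sub_C _]
  simp [Fin.card_filter_val_lt, hi]

theorem eval_tauP_of_lt {i : ℕ} {s : Fin (d+1)} (hs : (s : ℕ) < i) :
    eval (θ s) (tauP d θ i) = 0 := by
  rw [tauP, eval_prod]
  exact Finset.prod_eq_zero (Finset.mem_filter.2 ⟨Finset.mem_univ s, hs⟩) (by simp)

theorem tauP_comp_rev {i : ℕ} (hi : i ≤ d) : tauP d (θ ∘ Fin.rev) i = etaP d θ i :=
  Finset.prod_equiv Fin.revPerm (by simp; omega) (by simp)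

end tauP

namespace LeonardSystem

variable {K : Type} [Field K] {V : Type} [AddCommGroup V] [Module K V] {d : ℕ}
  (L : LeonardSystem K V d)

def dual : LeonardSystem K V d where
  A := L.As
  As := L.A
  θ := L.θs
  θs := L.θ
  hfin := L.hfin
  hdim := L.hdim
  θ_inj := L.θs_inj
  θs_inj := L.θ_inj
  hEig := L.hEigs
  hEigs := L.hEig
  hFar := L.hFars
  hNear := L.hNears
  hFars := L.hFar
  hNears := L.hNear

def reverse : LeonardSystem K V d where
  A := L.A
  As := L.As
  θ := L.θ ∘ Fin.rev
  θs := L.θs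
  hfin := L.hfin
  hdim := L.hdim
  θ_inj := L.θ_inj.comp Fin.rev_injective
  θs_inj := L.θs_inj
  hEig i := L.hEig i.rev
  hEigs := L.hEigs
  hFar i j h := by
    rw [primIdem_comp _ _ Fin.rev_bijective, primIdem_comp _ _ Fin.rev_bijective]
    exact L.hFar _ _ (by simp only [Fin.val_rev]; omega)
  hNear i j h := by
    rw [primIdem_comp _ _ Fin.rev_bijective, primIdem_comp _ _ Fin.rev_bijective]
    exact L.hNear _ _ (by simp only [Fin.val_rev]; omega)
  hFars := L.hFars
  hNears := L.hNears

theorem reverse_Es : L.reverse.Es = L.Es := rfl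

theorem reverse_dual_A : L.reverse.dual.A = L.As := rfl

theorem reverse_dual_Es (r : Fin (d+1)) : L.reverse.dual.Es r = L.E r.rev :=
  primIdem_comp L.A L.θ Fin.rev_bijective r

theorem reverse_tau {i : ℕ} (hi : i ≤ d) : L.reverse.tau i = L.eta i := by
  rw [tau, eta, reverse, tauP_comp_rev L.θ hi]

theorem reverse_φ : L.reverse.φ = L.ϕ := by
  ext i
  unfold φ ϕ
  split_ifs with hi
  · rw [reverse_Es, reverse_tau L (by omega), reverse_tau L (by omega)]
    rfl
  · rfl

noncomputable def starBasis : Module.Basis (Fin (d+1)) K V :=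
  haveI := L.hfin
  basisOfLinearIndependentOfCardEqFinrank
    (L.As.eigenvectors_linearIndependent' L.θs L.θs_inj _
      fun i => (L.hEigs i).exists_hasEigenvector.choose_spec)
    (by simp [L.hdim])

theorem hasEigenvector_starBasis (i : Fin (d+1)) :
    L.As.HasEigenvector (L.θs i) (L.starBasis i) := by
  rw [starBasis, coe_basisOfLinearIndependentOfCardEqFinrank]
  exact (L.hEigs i).exists_hasEigenvector.choose_spec

theorem Es_apply_starBasis (r s : Fin (d+1)) :
    L.Es r (L.starBasis s) = if r = s then L.starBasis s else 0 :=
  primIdem_apply_of_hasEigenvector L.θs_inj (L.hasEigenvector_starBasis s) r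

theorem Es_apply (r : Fin (d+1)) (w : V) :
    L.Es r w = L.starBasis.repr w r • L.starBasis r := by
  conv_lhs => rw [← L.starBasis.sum_repr w]
  simp only [map_sum, map_smul, Es_apply_starBasis, smul_ite, smul_zero, Finset.sum_ite_eq,
    Finset.mem_univ, if_true]

theorem sum_Es_apply (w : V) : ∑ r, L.Es r w = w := by
  simp [Es_apply, L.starBasis.sum_repr]

theorem Es_mul_aeval (r : Fin (d+1)) (p : K[X]) :
    L.Es r * aeval L.As p = eval (L.θs r) p • L.Es r := by
  refine L.starBasis.ext fun s => ?_
  simp only [Module.End.mul_apply, LinearMap.smul_apply,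
    Module.End.aeval_apply_of_hasEigenvector (L.hasEigenvector_starBasis s), map_smul,
    Es_apply_starBasis]
  split_ifs with h <;> simp [h]

theorem aeval_mul_Es (r : Fin (d+1)) (p : K[X]) :
    aeval L.As p * L.Es r = eval (L.θs r) p • L.Es r := by
  rw [← Es_mul_aeval, Es, primIdem, ← map_mul, ← map_mul, mul_comm]

theorem sum_E_apply (w : V) : ∑ s, L.E s w = w := L.dual.sum_Es_apply w

theorem E_mul_aeval (s : Fin (d+1)) (p : K[X]) :
    L.E s * aeval L.A p = eval (L.θ s) p • L.E s := L.dual.Es_mul_aeval s p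

theorem aeval_mul_E (s : Fin (d+1)) (p : K[X]) :
    aeval L.A p * L.E s = eval (L.θ s) p • L.E s := L.dual.aeval_mul_Es s p

theorem Es_As_apply (r : Fin (d+1)) (w : V) : L.Es r (L.As w) = L.θs r • L.Es r w := by
  simpa using LinearMap.congr_fun (L.Es_mul_aeval r X) w

theorem exists_Es_apply_eq_smul {r : Fin (d+1)} {x : V} (hx : L.Es r x ≠ 0) (y : V) :
    ∃ c : K, L.Es r y = c • L.Es r x := by
  rw [L.Es_apply r x] at hx ⊢
  refine ⟨L.starBasis.repr y r / L.starBasis.repr x r, ?_⟩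
  rw [smul_smul, div_mul_cancel₀ _ (left_ne_zero_of_smul hx), Es_apply]

theorem Es_apply_apply_starBasis (M : Module.End K V) (r : Fin (d+1)) :
    L.Es r (M (L.starBasis r)) = LinearMap.trace K V (M * L.Es r) • L.starBasis r := by
  have := L.hfin
  rw [LinearMap.trace_eq_matrix_trace K L.starBasis, Matrix.trace,
    Finset.sum_eq_single r, Es_apply]
  · simp [LinearMap.toMatrix_apply, Es_apply_starBasis]
  · intro s _ hs
    simp [LinearMap.toMatrix_apply, Es_apply_starBasis, Ne.symm hs]
  · simp

/-- `E*_0 V + ⋯ + E*_{j-1} V` (note the exclusive bound). -/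
noncomputable def starFiltration (j : ℕ) : Submodule K V :=
  ⨅ (r : Fin (d+1)) (_ : j ≤ (r : ℕ)), LinearMap.ker (L.Es r)

variable {L}

theorem mem_starFiltration {j : ℕ} {w : V} :
    w ∈ L.starFiltration j ↔ ∀ r : Fin (d+1), j ≤ (r : ℕ) → L.Es r w = 0 := by
  simp [starFiltration]

theorem starFiltration_mono {j k : ℕ} (h : j ≤ k) : L.starFiltration j ≤ L.starFiltration k :=
  fun _ hw => mem_starFiltration.2 fun r hr => mem_starFiltration.1 hw r (h.trans hr)

variable (L)

theorem starFiltration_zero : L.starFiltration 0 = ⊥ := by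
  refine eq_bot_iff.2 fun w hw => ?_
  rw [Submodule.mem_bot, ← L.sum_Es_apply w]
  exact Finset.sum_eq_zero fun r _ => mem_starFiltration.1 hw r (Nat.zero_le _)

theorem Es_A_apply (r : Fin (d+1)) (w : V) :
    L.Es r (L.A w) = ∑ s, L.Es r (L.A (L.Es s w)) := by
  conv_lhs => rw [← L.sum_Es_apply w]
  simp only [map_sum]

theorem Es_A_Es_apply_of_lt {r s : Fin (d+1)} (h : (s : ℕ) + 1 < r) (w : V) :
    L.Es r (L.A (L.Es s w)) = 0 :=
  LinearMap.congr_fun (L.hFars r s (Or.inr h)) w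

variable {L}

theorem A_apply_mem_starFiltration {j : ℕ} {w : V} (hw : w ∈ L.starFiltration j) :
    L.A w ∈ L.starFiltration (j + 1) := by
  refine mem_starFiltration.2 fun r hr => ?_
  rw [Es_A_apply]
  refine Finset.sum_eq_zero fun s _ => ?_
  rcases lt_or_ge (s : ℕ) j with hs | hs
  · exact L.Es_A_Es_apply_of_lt (by omega) w
  · rw [mem_starFiltration.1 hw s hs, map_zero, map_zero]

theorem pow_apply_mem_starFiltration {j : ℕ} {w : V} (hw : w ∈ L.starFiltration j) (m : ℕ) :
    (L.A ^ m) w ∈ L.starFiltration (j + m) := by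
  induction m with
  | zero => simpa using hw
  | succ m ih => rw [pow_succ', Module.End.mul_apply]; exact A_apply_mem_starFiltration ih

theorem aeval_apply_mem_starFiltration {j m : ℕ} {w : V} (hw : w ∈ L.starFiltration j)
    {p : K[X]} (hp : p.natDegree ≤ m) : aeval L.A p w ∈ L.starFiltration (j + m) := by
  rw [aeval_eq_sum_range, LinearMap.sum_apply]
  refine Submodule.sum_mem _ fun k hk => Submodule.smul_mem _ _ ?_
  exact starFiltration_mono (by simp at hk; omega) (pow_apply_mem_starFiltration hw k)

theorem Es_succ_A_apply {r : Fin d} {w : V} (hw : w ∈ L.starFiltration (r + 1)) :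
    L.Es r.succ (L.A w) = L.Es r.succ (L.A (L.Es r.castSucc w)) := by
  rw [Es_A_apply, Finset.sum_eq_single r.castSucc]
  · intro s _ hs
    rcases lt_or_gt_of_ne (Fin.val_ne_of_ne hs) with h | h
    · exact L.Es_A_Es_apply_of_lt (by simp only [Fin.val_succ, Fin.val_castSucc] at h ⊢; omega) w
    · rw [mem_starFiltration.1 hw s (by simpa using h), map_zero, map_zero]
  · simp

theorem Es_succ_A_apply_ne_zero {r : Fin d} {w : V} (hw : w ∈ L.starFiltration (r + 1))
    (hne : L.Es r.castSucc w ≠ 0) : L.Es r.succ (L.A w) ≠ 0 := by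
  obtain ⟨y, hy⟩ : ∃ y, L.Es r.succ (L.A (L.Es r.castSucc y)) ≠ 0 := by
    by_contra! h
    exact L.hNears r.succ r.castSucc (by simp) (LinearMap.ext h)
  obtain ⟨c, hc⟩ := L.exists_Es_apply_eq_smul hne y
  rw [Es_succ_A_apply hw]
  intro h0
  rw [hc, map_smul, map_smul, h0, smul_zero] at hy
  exact hy rfl

theorem Es_pow_apply_ne_zero {s : Fin (d+1)} {w : V} (hw : w ∈ L.starFiltration (s + 1))
    (hne : L.Es s w ≠ 0) (m : ℕ) :
    ∀ t : Fin (d+1), (t : ℕ) = s + m → L.Es t ((L.A ^ m) w) ≠ 0 := by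
  induction m with
  | zero =>
    intro t ht
    rwa [pow_zero, Module.End.one_apply, show t = s from Fin.ext ht]
  | succ m ih =>
    intro t ht
    let r : Fin d := ⟨s + m, by omega⟩
    have hr : t = r.succ := Fin.ext ht
    rw [hr, pow_succ', Module.End.mul_apply]
    exact Es_succ_A_apply_ne_zero
      (by simpa [add_right_comm] using pow_apply_mem_starFiltration hw m) (ih r.castSucc rfl)

theorem Es_aeval_apply_of_monic {j : ℕ} {w : V} (hw : w ∈ L.starFiltration (j + 1))
    {p : K[X]} (hp : p.Monic) {t : Fin (d+1)} (ht : (t : ℕ) = j + p.natDegree) :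
    L.Es t (aeval L.A p w) = L.Es t ((L.A ^ p.natDegree) w) := by
  rw [aeval_eq_sum_range, LinearMap.sum_apply, map_sum, Finset.sum_range_succ,
    Finset.sum_eq_zero, zero_add, LinearMap.smul_apply, map_smul, hp.coeff_natDegree, one_smul]
  intro k hk
  rw [LinearMap.smul_apply, map_smul,
    mem_starFiltration.1 (pow_apply_mem_starFiltration hw k) t (by simp at hk; omega), smul_zero]

theorem eq_zero_of_aeval_apply_eq_zero {j : ℕ} {w : V} (hw : w ∈ L.starFiltration j)
    {p : K[X]} (hp : p.Monic) (hdeg : j + p.natDegree ≤ d + 1) (h : aeval L.A p w = 0) :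
    w = 0 := by
  induction j with
  | zero => rwa [starFiltration_zero, Submodule.mem_bot] at hw
  | succ j ih =>
    refine ih (mem_starFiltration.2 fun r hr => ?_) (by omega)
    rcases hr.lt_or_eq with hr | rfl
    · exact mem_starFiltration.1 hw r hr
    by_contra hne
    let t : Fin (d+1) := ⟨r + p.natDegree, by omega⟩
    exact Es_pow_apply_ne_zero hw hne _ t rfl
      (by rw [← Es_aeval_apply_of_monic hw hp rfl, h, map_zero])

variable (L)

theorem tau_apply_eq_zero {j : ℕ} {w : V} (hw : w ∈ L.dual.starFiltration j) :
    L.tau j w = 0 := by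
  rw [← L.sum_E_apply w, map_sum]
  refine Finset.sum_eq_zero fun s _ => ?_
  rcases lt_or_ge (s : ℕ) j with hs | hs
  · rw [tau, ← Module.End.mul_apply, aeval_mul_E, eval_tauP_of_lt L.θ hs, zero_smul,
      LinearMap.zero_apply]
  · rw [show L.E s w = 0 from mem_starFiltration.1 hw s hs, map_zero]

/-- `L.reverse.dual.starFiltration (d + 1 - j)` is `E_j V + ⋯ + E_d V`. -/
theorem starFiltration_inf_reverse_dual_eq_bot {j : ℕ} (hj : j ≤ d + 1) :
    L.starFiltration j ⊓ L.reverse.dual.starFiltration (d + 1 - j) = ⊥ := by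
  refine eq_bot_iff.2 fun w ⟨hw, hw'⟩ => ?_
  refine eq_zero_of_aeval_apply_eq_zero hw (monic_tauP _ (d + 1 - j)) ?_
    (L.reverse.tau_apply_eq_zero hw')
  rw [natDegree_tauP _ (by omega)]
  omega

noncomputable def ξ : V := L.starBasis 0

noncomputable def u (i : ℕ) : V := L.tau i L.ξ

theorem ξ_ne_zero : L.ξ ≠ 0 := L.starBasis.ne_zero 0

theorem ξ_mem_starFiltration : L.ξ ∈ L.starFiltration 1 :=
  mem_starFiltration.2 fun r hr => by
    rw [ξ, Es_apply_starBasis, if_neg (by rintro rfl; simp at hr)]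

theorem u_mem_starFiltration (i : ℕ) : L.u i ∈ L.starFiltration (i + 1) := by
  rw [add_comm]
  exact aeval_apply_mem_starFiltration L.ξ_mem_starFiltration (natDegree_tauP_le L.θ i)

theorem u_mem_reverse_dual_starFiltration (i : ℕ) :
    L.u i ∈ L.reverse.dual.starFiltration (d + 1 - i) := by
  refine mem_starFiltration.2 fun r hr => ?_
  rw [reverse_dual_Es, u, tau, ← Module.End.mul_apply, E_mul_aeval,
    eval_tauP_of_lt L.θ (by simp only [Fin.val_rev]; omega), zero_smul, LinearMap.zero_apply]

theorem Es_u_self (r : Fin (d+1)) : L.Es r (L.u r) = L.Es r ((L.A ^ (r : ℕ)) L.ξ) := by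
  have hr : (r : ℕ) ≤ d + 1 := by omega
  have := Es_aeval_apply_of_monic L.ξ_mem_starFiltration (monic_tauP L.θ r)
    (t := r) (by rw [natDegree_tauP _ hr, zero_add])
  rwa [natDegree_tauP _ hr] at this

theorem Es_u_self_ne_zero (r : Fin (d+1)) : L.Es r (L.u r) ≠ 0 := by
  rw [Es_u_self]
  refine Es_pow_apply_ne_zero (s := 0) L.ξ_mem_starFiltration ?_ _ r (by simp)
  rw [ξ, Es_apply_starBasis, if_pos rfl]
  exact L.ξ_ne_zero

theorem exists_As_u_succ (i : Fin d) :
    ∃ c : K, c ≠ 0 ∧ L.As (L.u (i + 1)) = L.θs i.succ • L.u (i + 1) + c • L.u i := by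
  set w := L.As (L.u (i + 1)) - L.θs i.succ • L.u (i + 1) with hw_def
  have hw : w ∈ L.starFiltration (i + 1) := by
    refine mem_starFiltration.2 fun r hr => ?_
    rw [map_sub, map_smul, Es_As_apply, ← sub_smul]
    rcases hr.lt_or_eq with hr | hr
    · rw [mem_starFiltration.1 (L.u_mem_starFiltration (i + 1)) r hr, smul_zero]
    · rw [show r = i.succ from Fin.ext hr.symm, sub_self, zero_smul]
  have hw' : w ∈ L.reverse.dual.starFiltration (d + 1 - i) := by
    have hu := L.u_mem_reverse_dual_starFiltration (i + 1)
    rw [show d + 1 - i = d + 1 - (i + 1) + 1 by omega]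
    exact Submodule.sub_mem _ (A_apply_mem_starFiltration hu)
      (Submodule.smul_mem _ _ (starFiltration_mono (Nat.le_succ _) hu))
  obtain ⟨c, hc⟩ := L.exists_Es_apply_eq_smul (L.Es_u_self_ne_zero i.castSucc) w
  -- `w - c u_i` lies in `E*_0 V + ⋯ + E*_{i-1} V` and in `E_i V + ⋯ + E_d V`
  have hwc : w - c • L.u i = 0 := by
    rw [← Submodule.mem_bot K, ← L.starFiltration_inf_reverse_dual_eq_bot (j := i) (by omega)]
    refine ⟨mem_starFiltration.2 fun r hr => ?_, Submodule.sub_mem _ hw'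
      (Submodule.smul_mem _ _ (L.u_mem_reverse_dual_starFiltration i))⟩
    rcases hr.lt_or_eq with hr | hr
    · rw [map_sub, map_smul, mem_starFiltration.1 hw r hr,
        mem_starFiltration.1 (L.u_mem_starFiltration i) r hr, smul_zero, sub_zero]
    · rw [show r = i.castSucc from Fin.ext hr.symm, map_sub, map_smul, hc]
      exact sub_self _
  refine ⟨c, fun hc0 => ?_, ?_⟩
  · -- otherwise `u_{i+1}` would be an eigenvector of `A*` in `E_{i+1} V + ⋯ + E_d V`
    rw [hc0, zero_smul, sub_zero, hw_def, sub_eq_zero] at hwc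
    refine L.Es_u_self_ne_zero i.succ (?_ : L.Es i.succ (L.u (i + 1)) = 0)
    rw [eq_zero_of_aeval_apply_eq_zero (L.u_mem_reverse_dual_starFiltration (i + 1))
      (monic_X_sub_C (L.θs i.succ)) (by rw [natDegree_X_sub_C]; omega)
      (by simp [reverse_dual_A, hwc]), map_zero]
  · rw [← sub_eq_iff_eq_add', ← hw_def, ← sub_eq_zero, hwc]

theorem sub_smul_Es_apply_of_As_apply {y z : V} {θ a : K} (h : L.As y = θ • y + a • z)
    (r : Fin (d+1)) : (L.θs r - θ) • L.Es r y = a • L.Es r z := by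
  rw [sub_smul, ← Es_As_apply, h, map_add, map_smul, map_smul, add_sub_cancel_left]

theorem Es_zero_u (i : ℕ) : L.Es 0 (L.u i) = LinearMap.trace K V (L.tau i * L.Es 0) • L.ξ :=
  L.Es_apply_apply_starBasis (L.tau i) 0

theorem trace_tau_succ_of_As_u_succ (i : Fin d) {c : K}
    (h : L.As (L.u (i + 1)) = L.θs i.succ • L.u (i + 1) + c • L.u i) :
    (L.θs 0 - L.θs i.succ) * LinearMap.trace K V (L.tau (i + 1) * L.Es 0) =
      c * LinearMap.trace K V (L.tau i * L.Es 0) := by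
  have h0 := L.sub_smul_Es_apply_of_As_apply h 0
  rw [Es_zero_u, Es_zero_u, smul_smul, smul_smul] at h0
  exact smul_left_injective K L.ξ_ne_zero h0

theorem trace_tau_mul_Es_zero_ne_zero {i : ℕ} (hi : i ≤ d) :
    LinearMap.trace K V (L.tau i * L.Es 0) ≠ 0 := by
  induction i with
  | zero =>
    refine left_ne_zero_of_smul (?_ : _ • L.ξ ≠ 0)
    simpa [Es_zero_u] using L.Es_u_self_ne_zero 0
  | succ i ih =>
    obtain ⟨c, hc, h⟩ := L.exists_As_u_succ ⟨i, hi⟩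
    have key := L.trace_tau_succ_of_As_u_succ ⟨i, hi⟩ h
    exact right_ne_zero_of_mul (key ▸ mul_ne_zero hc (ih (by omega)))

theorem φ_succ_eq_of_As_u_succ (i : Fin d) {c : K}
    (h : L.As (L.u (i + 1)) = L.θs i.succ • L.u (i + 1) + c • L.u i) : L.φ (i + 1) = c := by
  rw [φ, dif_pos (by omega), Nat.add_sub_cancel, div_eq_iff (L.trace_tau_mul_Es_zero_ne_zero
    (by omega))]
  exact L.trace_tau_succ_of_As_u_succ i h

theorem As_u_succ (i : Fin d) :
    L.As (L.u (i + 1)) = L.θs i.succ • L.u (i + 1) + L.φ (i + 1) • L.u i := by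
  obtain ⟨c, -, h⟩ := L.exists_As_u_succ i
  rwa [L.φ_succ_eq_of_As_u_succ i h]

theorem φ_succ_ne_zero (i : Fin d) : L.φ (i + 1) ≠ 0 := by
  obtain ⟨c, hc, h⟩ := L.exists_As_u_succ i
  rwa [L.φ_succ_eq_of_As_u_succ i h]

theorem reverse_u {i : ℕ} (hi : i ≤ d) : L.reverse.u i = L.eta i L.ξ := by
  rw [u, reverse_tau L hi]
  rfl

noncomputable def switchingCoeff (i : ℕ) : K :=
  (∏ k ∈ Finset.Icc 1 i, L.ϕ k) / (∏ k ∈ Finset.Icc 1 i, L.φ k)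

theorem Ss_eq : L.Ss = ∑ r : Fin (d+1), L.switchingCoeff r • L.Es r := rfl

theorem switchingCoeff_succ_mul {i : ℕ} (hφ : L.φ (i + 1) ≠ 0) :
    L.switchingCoeff (i + 1) * L.φ (i + 1) = L.switchingCoeff i * L.ϕ (i + 1) := by
  rw [switchingCoeff, switchingCoeff, Finset.prod_Icc_succ_top (by omega),
    Finset.prod_Icc_succ_top (by omega), div_mul_eq_mul_div, mul_div_mul_right _ _ hφ,
    mul_div_right_comm]

theorem switchingCoeff_smul_Es_eta_apply {r : Fin (d+1)} {i : ℕ} (hri : (r : ℕ) ≤ i)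
    (hi : i ≤ d) :
    L.switchingCoeff r • L.Es r (L.eta i L.ξ) = L.switchingCoeff i • L.Es r (L.u i) := by
  induction i, hri using Nat.le_induction with
  | base =>
    have h := L.reverse.Es_u_self r
    rw [reverse_u L hi] at h
    congr 1
    exact h.trans (L.Es_u_self r).symm
  | succ i hri ih =>
    let j : Fin d := ⟨i, by omega⟩
    have hu : (L.θs r - L.θs j.succ) • L.Es r (L.u (i + 1)) = L.φ (i + 1) • L.Es r (L.u i) :=
      L.sub_smul_Es_apply_of_As_apply (L.As_u_succ j) r
    have hv : (L.θs r - L.θs j.succ) • L.Es r (L.eta (i + 1) L.ξ) =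
        L.ϕ (i + 1) • L.Es r (L.eta i L.ξ) := by
      have h := L.reverse.sub_smul_Es_apply_of_As_apply (L.reverse.As_u_succ j) r
      rwa [reverse_φ, reverse_u L hi, reverse_u L (by omega)] at h
    have hθ : L.θs r - L.θs j.succ ≠ 0 := by
      refine sub_ne_zero.2 fun h => ?_
      have : (r : ℕ) = i + 1 := congrArg Fin.val (L.θs_inj h)
      omega
    refine smul_right_injective V hθ ?_
    simp only [smul_comm (L.θs r - L.θs j.succ) (L.switchingCoeff _)]
    rw [hv, hu, smul_comm, ih (by omega), smul_smul, smul_smul, mul_comm,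
      ← L.switchingCoeff_succ_mul (L.φ_succ_ne_zero j)]

theorem Ss_eta_apply_ξ (i : Fin (d+1)) :
    L.Ss (L.eta i L.ξ) = L.switchingCoeff i • L.u i := by
  rw [Ss_eq, ← L.sum_Es_apply (L.u i), Finset.smul_sum, LinearMap.sum_apply]
  refine Finset.sum_congr rfl fun r _ => ?_
  rcases le_or_gt (r : ℕ) i with hr | hr
  · exact L.switchingCoeff_smul_Es_eta_apply hr (by omega)
  · have hv := mem_starFiltration.1 (L.reverse.u_mem_starFiltration i) r hr
    rw [reverse_u L (by omega)] at hv
    rw [LinearMap.smul_apply, show L.Es r (L.eta i L.ξ) = 0 from hv,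
      mem_starFiltration.1 (L.u_mem_starFiltration i) r hr, smul_zero, smul_zero]

end LeonardSystem

/-- `S* η_i(A) E*_0 = (ϕ_1⋯ϕ_i)/(φ_1⋯φ_i) τ_i(A) E*_0`. -/
theorem LeonardSystem.Ss_eta_Es0 {K : Type} [Field K] {V : Type}
    [AddCommGroup V] [Module K V] {d : ℕ} (L : LeonardSystem K V d) (i : Fin (d+1)) :
    L.Ss * (L.eta (i:ℕ) * L.Es 0) =
      ((∏ k ∈ Finset.Icc 1 (i:ℕ), L.ϕ k) / (∏ k ∈ Finset.Icc 1 (i:ℕ), L.φ k)) •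
        (L.tau (i:ℕ) * L.Es 0) := by
  ext w
  have hw : L.Es 0 w = L.starBasis.repr w 0 • L.ξ := L.Es_apply 0 w
  simp only [Module.End.mul_apply, LinearMap.smul_apply, hw, map_smul, L.Ss_eta_apply_ξ i]
  rw [smul_comm]
  rfl
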